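/- The number of subgraphs of G on which a d-flow exists equals the number of orientations of G on which a d-flow exists; that is, |S_f| = |O_f|. -/

import Mathlib

/-!
Fix a reference orientation `E'` of `G`. Passing from a flow `f` to its net flow
`x e = f e - f (drev e)` on `E'`, a set `D` admits a `d`-flow iff the convex set of conserving
net flows meets a box whose side at `e ∈ E'` is `[-1, 1]` or `{0}` when `D` is a subgraph (edge
present or absent) and `[0, 1]` or `[-1, 0]` when `D` is an orientation (which direction is used).
Projecting the net flows that satisfy the other constraints to one coordinate gives an interval
`I`, and `[I meets [-1, 1]] + [0 ∈ I] = [I meets [0, 1]] + [I meets [-1, 0]]`. So switching the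
coordinates from the subgraph type to the orientation type one at a time preserves the number
of boxes met.
-/

open Finset

section Defs

variable {V : Type*}

/-- Reversal of a directed edge. -/
def drev (e : V × V) : V × V := (e.2, e.1)

/-- `K` is a subgraph of the (symmetric) edge set `E`: it contains either both or
neither of `e` and `drev e` for every `e ∈ E`. -/
def IsSubgraph [DecidableEq V] (E K : Finset (V × V)) : Prop :=
  K ⊆ E ∧ ∀ e ∈ E, (e ∈ K ↔ drev e ∈ K)

/-- `L` is an orientation of the (symmetric) edge set `E`: it contains exactly one of
`e` and `drev e` for every `e ∈ E`. -/
def IsOrientation [DecidableEq V] (E L : Finset (V × V)) : Prop :=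
  L ⊆ E ∧ ∀ e ∈ E, (e ∈ L ↔ drev e ∉ L)

variable [Fintype V] [DecidableEq V]

/-- `f` is a `d`-flow on the directed subgraph `D` of the graph with edge set `E`. -/
def IsFlow (E D : Finset (V × V)) (d : V → ℤ) (f : V × V → ℝ) : Prop :=
  (∀ e ∈ E, 0 ≤ f e ∧ f e ≤ 1) ∧
  (∀ e, e ∉ D → f e = 0) ∧
  ∀ u : V,
    ((Finset.univ.filter (fun v : V => (u, v) ∈ E)).sum fun v => f (u, v)) -
      ((Finset.univ.filter (fun v : V => (v, u) ∈ E)).sum fun v => f (v, u)) = (d u : ℝ)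

/-- A `d`-flow exists on `D`. -/
def AdmitsFlow (E D : Finset (V × V)) (d : V → ℤ) : Prop :=
  ∃ f : V × V → ℝ, IsFlow E D d f

/-- The `w`-cost of a flow `f`. -/
def flowCost (E : Finset (V × V)) (w : V × V → ℝ) (f : V × V → ℝ) : ℝ :=
  ∑ e ∈ E, w e * f e

/-- `f` is a min-cost `d`-flow on `D`. -/
def IsMinCostFlow (E D : Finset (V × V)) (d : V → ℤ) (w : V × V → ℝ)
    (f : V × V → ℝ) : Prop :=
  IsFlow E D d f ∧ ∀ g : V × V → ℝ, IsFlow E D d g → flowCost E w f ≤ flowCost E w g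

/-- The `{0,1}`-valued function determined by a set of edges. -/
def ind (S : Finset (V × V)) : V × V → ℝ := fun e => if e ∈ S then 1 else 0

/-- `A` assigns to every flow-admitting `D ⊆ E` the (edge set of the) unique,
`{0,1}`-valued min-cost `d`-flow on `D`. -/
def GoodA (E : Finset (V × V)) (d : V → ℤ) (w : V × V → ℝ)
    (A : Finset (V × V) → Finset (V × V)) : Prop :=
  ∀ D : Finset (V × V), D ⊆ E → AdmitsFlow E D d →
    IsMinCostFlow E D d w (ind (A D)) ∧
    ∀ f : V × V → ℝ, IsMinCostFlow E D d w f → f = ind (A D)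

/-- `A(D) = A(D')`: both `D` and `D'` admit a `d`-flow and their unique min-cost
`d`-flows coincide.  (If one of them admits no `d`-flow this is false.) -/
def AEq (E : Finset (V × V)) (d : V → ℤ) (A : Finset (V × V) → Finset (V × V))
    (D D' : Finset (V × V)) : Prop :=
  AdmitsFlow E D d ∧ AdmitsFlow E D' d ∧ A D = A D'

/-- `D ⊕ e := (D ∪ {e}) \ {drev e}`. -/
def oplus (D : Finset (V × V)) (e : V × V) : Finset (V × V) := insert e D \ {drev e}

/-- `D + e := D ∪ {e, drev e}`. -/
def padd (D : Finset (V × V)) (e : V × V) : Finset (V × V) := D ∪ {e, drev e}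

/-- `D − e := D \ {e, drev e}`. -/
def psub (D : Finset (V × V)) (e : V × V) : Finset (V × V) := D \ {e, drev e}

/-- The representative of `{e, drev e}` lying in the reference orientation `E'`. -/
def chi (E' : Finset (V × V)) (e : V × V) : V × V := if e ∈ E' then e else drev e

/-- The map `φ_e`. -/
noncomputable def phiE (E : Finset (V × V)) (d : V → ℤ)
    (A : Finset (V × V) → Finset (V × V)) (E' : Finset (V × V))
    (e : V × V) (D : Finset (V × V)) : Finset (V × V) := by
  classical
  exact
    if ¬ AEq E d A D (oplus D e) then oplus D (drev e)
    else if ¬ AEq E d A D (oplus D (drev e)) then oplus D e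
    else if e ∈ D then oplus D (chi E' e) else oplus D (drev (chi E' e))

/-- The map `ψ_e`. -/
noncomputable def psiE (E : Finset (V × V)) (d : V → ℤ)
    (A : Finset (V × V) → Finset (V × V)) (E' : Finset (V × V))
    (e : V × V) (D : Finset (V × V)) : Finset (V × V) := by
  classical
  exact
    if ¬ AEq E d A D (padd D e) then psub D e
    else if ¬ AEq E d A D (psub D e) then padd D e
    else if chi E' e ∈ D then padd D e else psub D e

end Defs

section MixedBox

variable {α : Type*} [DecidableEq α]

/-- Coordinates in `T` are of orientation type (one of the two directions is used), the others of
subgraph type (the edge is present or absent); `S` records the first alternative. -/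
def mixedRange (T S : Finset α) (e : α) : Set ℝ :=
  if e ∈ T then (if e ∈ S then Set.Icc 0 1 else Set.Icc (-1) 0)
  else (if e ∈ S then Set.Icc (-1) 1 else {0})

def mixedBox (s T S : Finset α) : Set (α → ℝ) := (s : Set α).pi (mixedRange T S)

theorem convex_mixedBox (s T S : Finset α) : Convex ℝ (mixedBox s T S) :=
  convex_pi fun e _ => by
    unfold mixedRange
    split_ifs <;> first | exact convex_Icc _ _ | exact convex_singleton _

theorem mixedBox_insert (j : α) (s T S : Finset α) :
    mixedBox (insert j s) T S = Function.eval j ⁻¹' mixedRange T S j ∩ mixedBox s T S := by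
  rw [mixedBox, coe_insert, Set.insert_pi, mixedBox]

theorem mixedBox_insert_left {j : α} {s : Finset α} (hj : j ∉ s) (T S : Finset α) :
    mixedBox s (insert j T) S = mixedBox s T S :=
  Set.pi_congr rfl fun e he => by
    simp [mixedRange, mem_insert, show e ≠ j from fun h => hj (h ▸ he)]

theorem mixedBox_insert_right {j : α} {s : Finset α} (hj : j ∉ s) (T S : Finset α) :
    mixedBox s T (insert j S) = mixedBox s T S :=
  Set.pi_congr rfl fun e he => by
    simp [mixedRange, mem_insert, show e ≠ j from fun h => hj (h ▸ he)]

end MixedBox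

theorem nonempty_inter_Icc_neg_one_one_iff (I : Set ℝ) :
    (I ∩ Set.Icc (-1) 1).Nonempty ↔
      (I ∩ Set.Icc 0 1).Nonempty ∨ (I ∩ Set.Icc (-1) 0).Nonempty := by
  rw [← Set.Icc_union_Icc_eq_Icc (by norm_num : (-1 : ℝ) ≤ 0) zero_le_one,
    Set.inter_union_distrib_left, Set.union_nonempty, or_comm]

theorem Convex.zero_mem_iff {I : Set ℝ} (hI : Convex ℝ I) :
    0 ∈ I ↔ (I ∩ Set.Icc 0 1).Nonempty ∧ (I ∩ Set.Icc (-1) 0).Nonempty := by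
  refine ⟨fun h => ⟨⟨0, h, by norm_num⟩, ⟨0, h, by norm_num⟩⟩, ?_⟩
  rintro ⟨⟨b, hb, hb0, -⟩, ⟨a, ha, -, ha0⟩⟩
  exact (convex_iff_ordConnected.mp hI).out ha hb ⟨ha0, hb0⟩

section MixedCount

variable {α : Type*} [DecidableEq α] {H : Set (α → ℝ)}

open Classical in
theorem card_filter_mixedBox_insert (hH : Convex ℝ H) {s T : Finset α} {j : α} (hjs : j ∈ s)
    (hjT : j ∉ T) :
    #{S ∈ s.powerset | (H ∩ mixedBox s (insert j T) S).Nonempty} =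
      #{S ∈ s.powerset | (H ∩ mixedBox s T S).Nonempty} := by
  obtain ⟨s, hj, rfl⟩ : ∃ s₀, j ∉ s₀ ∧ insert j s₀ = s :=
    ⟨s.erase j, notMem_erase j s, insert_erase hjs⟩
  simp_rw [card_filter]
  rw [sum_powerset_insert hj, sum_powerset_insert hj, ← sum_add_distrib, ← sum_add_distrib]
  refine sum_congr rfl fun R hR => ?_
  have hjR : j ∉ R := fun h => hj (mem_powerset.mp hR h)
  set I := LinearMap.proj (R := ℝ) (φ := fun _ : α => ℝ) j '' (H ∩ mixedBox s T R)
  have hI : Convex ℝ I := (hH.inter (convex_mixedBox s T R)).linear_image _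
  have hproj : ∀ {T' S' : Finset α}, mixedBox s T' S' = mixedBox s T R →
      ((H ∩ mixedBox (insert j s) T' S').Nonempty ↔ (I ∩ mixedRange T' S' j).Nonempty) := by
    intro T' S' h
    rw [mixedBox_insert, h, Set.image_inter_nonempty_iff, Set.inter_comm (Function.eval j ⁻¹' _),
      ← Set.inter_assoc]
    rfl
  rw [if_congr (hproj (mixedBox_insert_left hj T R)) rfl rfl, if_congr (hproj rfl) rfl rfl,
    if_congr (hproj ((mixedBox_insert_left hj T _).trans (mixedBox_insert_right hj T R))) rfl rfl,
    if_congr (hproj (mixedBox_insert_right hj T R)) rfl rfl]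
  simp only [mixedRange, mem_insert_self, if_true, hjT, hjR, if_false, Set.inter_singleton_nonempty]
  rw [nonempty_inter_Icc_neg_one_one_iff, hI.zero_mem_iff]
  by_cases hp : (I ∩ Set.Icc 0 1).Nonempty <;> by_cases hq : (I ∩ Set.Icc (-1) 0).Nonempty <;>
    simp [hp, hq]

open Classical in
theorem card_filter_mixedBox_eq (hH : Convex ℝ H) {s T : Finset α} (hT : T ⊆ s) :
    #{S ∈ s.powerset | (H ∩ mixedBox s T S).Nonempty} =
      #{S ∈ s.powerset | (H ∩ mixedBox s ∅ S).Nonempty} := by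
  induction T using Finset.induction_on with
  | empty => rfl
  | insert j T hjT ih =>
    rw [card_filter_mixedBox_insert hH (hT (mem_insert_self j T)) hjT,
      ih ((subset_insert j T).trans hT)]

end MixedCount

section Orientation

variable {V : Type*}

@[simp] theorem drev_drev (e : V × V) : drev (drev e) = e := rfl

@[simp] theorem drev_fst (e : V × V) : (drev e).1 = e.2 := rfl

@[simp] theorem drev_snd (e : V × V) : (drev e).2 = e.1 := rfl

variable [DecidableEq V] {E E' : Finset (V × V)} {e : V × V}

theorem mem_image_drev {S : Finset (V × V)} : e ∈ S.image drev ↔ drev e ∈ S :=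
  ⟨fun h => by obtain ⟨a, ha, rfl⟩ := mem_image.mp h; exact ha,
    fun h => mem_image.mpr ⟨drev e, h, rfl⟩⟩

theorem IsOrientation.drev_notMem (hE' : IsOrientation E E') (he : e ∈ E') : drev e ∉ E' :=
  (hE'.2 e (hE'.1 he)).mp he

theorem IsOrientation.mem_or_drev_mem (hE' : IsOrientation E E') (he : e ∈ E) :
    e ∈ E' ∨ drev e ∈ E' :=
  or_iff_not_imp_left.mpr fun h => not_not.mp (mt (hE'.2 e he).mpr h)

theorem IsOrientation.sum_eq_sum_add_drev {M : Type*} [AddCommMonoid M] (hE : ∀ e, e ∈ E ↔ drev e ∈ E)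
    (hE' : IsOrientation E E') (g : V × V → M) :
    ∑ e ∈ E, g e = ∑ e ∈ E', (g e + g (drev e)) := by
  rw [← sum_filter_add_sum_filter_not E (· ∈ E'), sum_add_distrib, filter_mem_eq_inter,
    inter_eq_right.mpr hE'.1]
  congr 1
  refine sum_nbij' drev drev (fun e he => ?_) (fun e he => ?_) (fun _ _ => rfl) (fun _ _ => rfl)
    (fun _ _ => rfl)
  · rw [mem_filter] at he
    exact (hE'.mem_or_drev_mem he.1).resolve_left he.2
  · exact mem_filter.mpr ⟨(hE _).mp (hE'.1 he), hE'.drev_notMem he⟩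

theorem exists_isOrientation (hE : ∀ e, e ∈ E ↔ drev e ∈ E)
    (hloop : ∀ e ∈ E, e.1 ≠ e.2) :
    ∃ E', IsOrientation E E' := by
  classical
  let : LinearOrder V := IsWellOrder.linearOrder WellOrderingRel
  refine ⟨E.filter fun e => e.1 < e.2, filter_subset _ _, fun e he => ?_⟩
  simp only [mem_filter, drev_fst, drev_snd, he, (hE e).mp he, true_and]
  exact ⟨fun h h' => lt_asymm h h', (hloop e he).lt_or_gt.resolve_right⟩

end Orientation

section Divergence

variable {V : Type*} [Fintype V] [DecidableEq V]

theorem sum_filter_mk_mem_eq (E : Finset (V × V)) (f : V × V → ℝ) (u : V) :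
    ∑ v with (u, v) ∈ E, f (u, v) = ∑ e ∈ E with e.1 = u, f e := by
  refine sum_nbij' (Prod.mk u) Prod.snd ?_ ?_ ?_ ?_ ?_ <;> grind

theorem sum_filter_mk_mem_eq' (E : Finset (V × V)) (f : V × V → ℝ) (u : V) :
    ∑ v with (v, u) ∈ E, f (v, u) = ∑ e ∈ E with e.2 = u, f e := by
  refine sum_nbij' (Prod.mk · u) Prod.fst ?_ ?_ ?_ ?_ ?_ <;> grind

theorem IsOrientation.divergence_eq {E E' : Finset (V × V)} (hE : ∀ e, e ∈ E ↔ drev e ∈ E)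
    (hE' : IsOrientation E E') (f : V × V → ℝ) (u : V) :
    ∑ v with (u, v) ∈ E, f (u, v) - ∑ v with (v, u) ∈ E, f (v, u) =
      ∑ e ∈ E' with e.1 = u, (f e - f (drev e)) -
        ∑ e ∈ E' with e.2 = u, (f e - f (drev e)) := by
  rw [sum_filter_mk_mem_eq, sum_filter_mk_mem_eq', sum_filter, sum_filter, ← sum_sub_distrib,
    hE'.sum_eq_sum_add_drev hE, sum_filter, sum_filter, ← sum_sub_distrib]
  refine sum_congr rfl fun e _ => ?_
  by_cases h₁ : e.1 = u <;> by_cases h₂ : e.2 = u <;> simp [h₁, h₂] <;> ring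

end Divergence

section NetFlow

variable {V : Type*} [DecidableEq V] {E E' D : Finset (V × V)} {d : V → ℤ} {x : V × V → ℝ}
  {e : V × V}

def netFlows (E' : Finset (V × V)) (d : V → ℤ) : Set (V × V → ℝ) :=
  {x | ∀ u, ∑ e ∈ E' with e.1 = u, x e - ∑ e ∈ E' with e.2 = u, x e = d u}

def capacityBox (E' D : Finset (V × V)) : Set (V × V → ℝ) :=
  (E' : Set (V × V)).pi fun e =>
    Set.Icc (if drev e ∈ D then -1 else 0) (if e ∈ D then 1 else 0)

theorem convex_netFlows (E' : Finset (V × V)) (d : V → ℤ) : Convex ℝ (netFlows E' d) := by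
  intro x hx y hy a b _ _ hab u
  simp only [Pi.add_apply, Pi.smul_apply, smul_eq_mul, sum_add_distrib, ← mul_sum]
  linear_combination a * hx u + b * hy u + (d u : ℝ) * hab

def flowOfNetFlow (E' : Finset (V × V)) (x : V × V → ℝ) (e : V × V) : ℝ :=
  if e ∈ E' then (x e)⁺ else if drev e ∈ E' then (x (drev e))⁻ else 0

theorem flowOfNetFlow_of_mem (he : e ∈ E') : flowOfNetFlow E' x e = (x e)⁺ := if_pos he

theorem flowOfNetFlow_of_drev_mem (hE' : IsOrientation E E') (he : drev e ∈ E') :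
    flowOfNetFlow E' x e = (x (drev e))⁻ := by
  rw [flowOfNetFlow, if_neg (by simpa using hE'.drev_notMem he), if_pos he]

theorem flowOfNetFlow_sub_drev (hE' : IsOrientation E E') (he : e ∈ E') :
    flowOfNetFlow E' x e - flowOfNetFlow E' x (drev e) = x e := by
  rw [flowOfNetFlow_of_mem he, flowOfNetFlow_of_drev_mem hE' (by simpa using he), drev_drev,
    posPart_sub_negPart]

variable [Fintype V]

theorem IsFlow.sub_drev_mem (hE : ∀ e, e ∈ E ↔ drev e ∈ E) (hE' : IsOrientation E E')
    {f : V × V → ℝ} (hf : IsFlow E D d f) :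
    (fun e => f e - f (drev e)) ∈ netFlows E' d ∩ capacityBox E' D := by
  refine ⟨fun u => (hE'.divergence_eq hE f u).symm.trans (hf.2.2 u), fun e he => ?_⟩
  have h₁ := hf.1 e (hE'.1 he)
  have h₂ := hf.1 (drev e) ((hE e).mp (hE'.1 he))
  constructor
  · split_ifs with h
    · linarith
    · linarith [hf.2.1 _ h]
  · split_ifs with h
    · linarith
    · linarith [hf.2.1 _ h]

theorem isFlow_flowOfNetFlow (hE : ∀ e, e ∈ E ↔ drev e ∈ E) (hE' : IsOrientation E E')
    (hx : x ∈ netFlows E' d ∩ capacityBox E' D) : IsFlow E D d (flowOfNetFlow E' x) := by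
  obtain ⟨hcons, hbox⟩ := hx
  refine ⟨fun e he => ?_, fun e he => ?_, fun u => ?_⟩
  · rcases hE'.mem_or_drev_mem he with h | h
    · have : x e ≤ 1 := (hbox e h).2.trans (by split_ifs <;> norm_num)
      rw [flowOfNetFlow_of_mem h, posPart_def]
      exact ⟨le_sup_right, sup_le this zero_le_one⟩
    · have : -1 ≤ x (drev e) := le_trans (by split_ifs <;> norm_num) (hbox _ h).1
      rw [flowOfNetFlow_of_drev_mem hE' h, negPart_def]
      exact ⟨le_sup_right, sup_le (by linarith) zero_le_one⟩
  · by_cases h : e ∈ E'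
    · have := (hbox e h).2
      rw [if_neg he] at this
      rw [flowOfNetFlow_of_mem h, posPart_eq_zero.mpr this]
    by_cases h' : drev e ∈ E'
    · have := (hbox _ h').1
      rw [drev_drev, if_neg he] at this
      rw [flowOfNetFlow_of_drev_mem hE' h', negPart_eq_zero.mpr this]
    · rw [flowOfNetFlow, if_neg h, if_neg h']
  · have hnet : ∀ e ∈ E', flowOfNetFlow E' x e - flowOfNetFlow E' x (drev e) = x e :=
      fun e he => flowOfNetFlow_sub_drev hE' he
    rw [hE'.divergence_eq hE, sum_congr rfl fun e he => hnet e (mem_filter.mp he).1,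
      sum_congr rfl fun e he => hnet e (mem_filter.mp he).1]
    exact hcons u

theorem admitsFlow_iff (hE : ∀ e, e ∈ E ↔ drev e ∈ E) (hE' : IsOrientation E E') :
    AdmitsFlow E D d ↔ (netFlows E' d ∩ capacityBox E' D).Nonempty :=
  ⟨fun ⟨_, hf⟩ => ⟨_, hf.sub_drev_mem hE hE'⟩,
    fun ⟨_, hx⟩ => ⟨_, isFlow_flowOfNetFlow hE hE' hx⟩⟩

end NetFlow

theorem ncard_setOf_and_eq_card_filter_powerset {α : Type*} [DecidableEq α]
    {F P : Finset α → Prop} [DecidablePred P] {s : Finset α} (g : Finset α → Finset α)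
    (hg : ∀ S ⊆ s, F (g S)) (hg_inter : ∀ S ⊆ s, g S ∩ s = S)
    (hinter : ∀ K, F K → g (K ∩ s) = K) :
    {K | F K ∧ P K}.ncard = #{S ∈ s.powerset | P (g S)} := by
  have himage : {K | F K ∧ P K} = g '' ↑{S ∈ s.powerset | P (g S)} := by
    ext K
    constructor
    · rintro ⟨hF, hP⟩
      refine ⟨K ∩ s, mem_coe.mpr (mem_filter.mpr ⟨mem_powerset.mpr inter_subset_right, ?_⟩),
        hinter K hF⟩
      rwa [hinter K hF]
    · rintro ⟨S, hS, rfl⟩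
      rw [mem_coe, mem_filter, mem_powerset] at hS
      exact ⟨hg S hS.1, hS.2⟩
  rw [himage, Set.InjOn.ncard_image, Set.ncard_coe_finset]
  intro S hS S' hS' h
  rw [mem_coe, mem_filter, mem_powerset] at hS hS'
  rw [← hg_inter S hS.1, h, hg_inter S' hS'.1]

section Restriction

variable {V : Type*} [DecidableEq V] {E E' S : Finset (V × V)}

theorem isSubgraph_union_image_drev (hE : ∀ e, e ∈ E ↔ drev e ∈ E)
    (hE' : IsOrientation E E') (hS : S ⊆ E') : IsSubgraph E (S ∪ S.image drev) := by
  refine ⟨union_subset (hS.trans hE'.1) fun e he => ?_, fun e _ => ?_⟩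
  · exact (hE e).mpr (hE'.1 (hS (mem_image_drev.mp he)))
  · simp only [mem_union, mem_image_drev, drev_drev, or_comm]

theorem union_image_drev_inter (hE' : IsOrientation E E') (hS : S ⊆ E') :
    (S ∪ S.image drev) ∩ E' = S := by
  ext e
  simp only [mem_inter, mem_union, mem_image_drev]
  have h₁ : drev e ∈ S → e ∉ E' := fun h => by simpa using hE'.drev_notMem (hS h)
  have h₂ : e ∈ S → e ∈ E' := @hS e
  tauto

theorem IsSubgraph.inter_union_image_drev {K : Finset (V × V)} (hK : IsSubgraph E K)
    (hE' : IsOrientation E E') : (K ∩ E') ∪ (K ∩ E').image drev = K := by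
  ext e
  simp only [mem_union, mem_inter, mem_image_drev]
  constructor
  · rintro (⟨h, -⟩ | ⟨h, -⟩)
    · exact h
    · exact (hK.2 _ (hK.1 h)).mp h
  · intro h
    rcases hE'.mem_or_drev_mem (hK.1 h) with h' | h'
    · exact Or.inl ⟨h, h'⟩
    · exact Or.inr ⟨(hK.2 e (hK.1 h)).mp h, h'⟩

theorem IsSubgraph.capacityBox_eq {K : Finset (V × V)} (hK : IsSubgraph E K)
    (hE' : IsOrientation E E') : capacityBox E' K = mixedBox E' ∅ (K ∩ E') :=
  Set.pi_congr rfl fun e he => by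
    rw [mem_coe] at he
    have := hK.2 e (hE'.1 he)
    by_cases h : e ∈ K
    · simp [mixedRange, h, this.mp h, he]
    · simp [mixedRange, h, mt this.mpr h]

theorem isOrientation_union_image_drev_sdiff (hE : ∀ e, e ∈ E ↔ drev e ∈ E)
    (hE' : IsOrientation E E') (hS : S ⊆ E') : IsOrientation E (S ∪ (E' \ S).image drev) := by
  refine ⟨union_subset (hS.trans hE'.1) fun e he => ?_, fun e he => ?_⟩
  · exact (hE e).mpr (hE'.1 (mem_sdiff.mp (mem_image_drev.mp he)).1)
  · simp only [mem_union, mem_image_drev, mem_sdiff, drev_drev]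
    rcases hE'.mem_or_drev_mem he with h | h
    · have h₁ := hE'.drev_notMem h
      have h₂ : drev e ∉ S := fun h' => h₁ (hS h')
      tauto
    · have h₁ : e ∉ E' := by simpa using hE'.drev_notMem h
      have h₂ : e ∉ S := fun h' => h₁ (hS h')
      tauto

theorem union_image_drev_sdiff_inter (hE' : IsOrientation E E') (hS : S ⊆ E') :
    (S ∪ (E' \ S).image drev) ∩ E' = S := by
  ext e
  simp only [mem_inter, mem_union, mem_image_drev, mem_sdiff]
  have h₁ : drev e ∈ E' → e ∉ E' := fun h => by simpa using hE'.drev_notMem h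
  have h₂ : e ∈ S → e ∈ E' := @hS e
  tauto

theorem IsOrientation.inter_union_image_drev_sdiff {L : Finset (V × V)}
    (hL : IsOrientation E L) (hE' : IsOrientation E E') :
    (L ∩ E') ∪ (E' \ (L ∩ E')).image drev = L := by
  ext e
  simp only [mem_union, mem_inter, mem_image_drev, mem_sdiff]
  constructor
  · rintro (⟨h, -⟩ | ⟨h, h'⟩)
    · exact h
    · by_contra hc
      exact h' ⟨(hL.2 _ (hE'.1 h)).mpr (by simpa using hc), h⟩
  · intro h
    rcases hE'.mem_or_drev_mem (hL.1 h) with h' | h'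
    · exact Or.inl ⟨h, h'⟩
    · exact Or.inr ⟨h', fun h'' => (hL.2 e (hL.1 h)).mp h h''.1⟩

theorem IsOrientation.capacityBox_eq {L : Finset (V × V)} (hL : IsOrientation E L)
    (hE' : IsOrientation E E') : capacityBox E' L = mixedBox E' E' (L ∩ E') :=
  Set.pi_congr rfl fun e he => by
    rw [mem_coe] at he
    have := hL.2 e (hE'.1 he)
    by_cases h : e ∈ L
    · simp [mixedRange, h, this.mp h, he]
    · simp [mixedRange, h, not_not.mp (mt this.mpr h), he]

end Restriction

section Count

variable {V : Type*} [Fintype V] [DecidableEq V] {E E' : Finset (V × V)}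

open Classical in
theorem ncard_subgraphs_admitsFlow (hE : ∀ e, e ∈ E ↔ drev e ∈ E) (hE' : IsOrientation E E')
    (d : V → ℤ) :
    {K | IsSubgraph E K ∧ AdmitsFlow E K d}.ncard =
      #{S ∈ E'.powerset | (netFlows E' d ∩ mixedBox E' ∅ S).Nonempty} := by
  rw [ncard_setOf_and_eq_card_filter_powerset (fun S => S ∪ S.image drev)
    (fun S hS => isSubgraph_union_image_drev hE hE' hS) (fun S hS => union_image_drev_inter hE' hS)
    (fun K hK => hK.inter_union_image_drev hE')]
  refine congrArg card (filter_congr fun S hS => ?_)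
  rw [mem_powerset] at hS
  rw [admitsFlow_iff hE hE', (isSubgraph_union_image_drev hE hE' hS).capacityBox_eq hE',
    union_image_drev_inter hE' hS]

open Classical in
theorem ncard_orientations_admitsFlow (hE : ∀ e, e ∈ E ↔ drev e ∈ E)
    (hE' : IsOrientation E E') (d : V → ℤ) :
    {L | IsOrientation E L ∧ AdmitsFlow E L d}.ncard =
      #{S ∈ E'.powerset | (netFlows E' d ∩ mixedBox E' E' S).Nonempty} := by
  rw [ncard_setOf_and_eq_card_filter_powerset (fun S => S ∪ (E' \ S).image drev)
    (fun S hS => isOrientation_union_image_drev_sdiff hE hE' hS)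
    (fun S hS => union_image_drev_sdiff_inter hE' hS)
    (fun L hL => hL.inter_union_image_drev_sdiff hE')]
  refine congrArg card (filter_congr fun S hS => ?_)
  rw [mem_powerset] at hS
  rw [admitsFlow_iff hE hE', (isOrientation_union_image_drev_sdiff hE hE' hS).capacityBox_eq hE',
    union_image_drev_sdiff_inter hE' hS]

end Count

theorem card_subgraphs_eq_card_orientations_admitting_flow_general
    {V : Type*} [Fintype V] [DecidableEq V]
    (E : Finset (V × V)) (hE_symm : ∀ e, e ∈ E ↔ drev e ∈ E)
    (hE_ne : ∀ e ∈ E, e.1 ≠ e.2)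
    (d : V → ℤ) :
    {K : Finset (V × V) | IsSubgraph E K ∧ AdmitsFlow E K d}.ncard =
      {L : Finset (V × V) | IsOrientation E L ∧ AdmitsFlow E L d}.ncard := by
  obtain ⟨E', hE'⟩ := exists_isOrientation hE_symm hE_ne
  rw [ncard_subgraphs_admitsFlow hE_symm hE', ncard_orientations_admitsFlow hE_symm hE',
    card_filter_mixedBox_eq (convex_netFlows E' d) subset_rfl]

theorem card_subgraphs_eq_card_orientations_admitting_flow
    {V : Type*} [Fintype V] [DecidableEq V]
    (E : Finset (V × V)) (hE_symm : ∀ e, e ∈ E ↔ drev e ∈ E)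
    (hE_ne : ∀ e ∈ E, e.1 ≠ e.2)
    (d : V → ℤ) (hd : ∑ u : V, d u = 0) :
    {K : Finset (V × V) | IsSubgraph E K ∧ AdmitsFlow E K d}.ncard =
      {L : Finset (V × V) | IsOrientation E L ∧ AdmitsFlow E L d}.ncard :=
  card_subgraphs_eq_card_orientations_admitting_flow_general E hE_symm hE_ne d
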